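/- arXiv:1511.06484 — 2 statements merged into one kernel-verified Lean document; each statement's English description precedes it below -/
import Mathlib

section
/- Fix an integer d ≥ 1. Define a sequence (a_m)_{m≥1} by: a_1 = 3d−2, a_2 = 0, and for m = 3dn+r > 2 with 0 ≤ r < 3d: a_m = p_{d,r/3}(n) if r ≡ 0 (mod 3); a_m = 3d if r ≡ 1 (mod 3); a_m = 2 if r = 3d−1; and a_m = 3 if r ≡ 2 (mod 3) and r ≠ 3d−1. Then a_m = a_{m−a_{m−1}} + a_{m−a_{m−2}} for all m > 3d+2, with the convention a_j = 0 for j ≤ 0. -/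
/-- Binomial coefficient `C(x, j)` extended polynomially in the (integer) upper argument. -/
def pbinom (x : ℤ) (j : ℕ) : ℤ := (∏ i ∈ Finset.range j, (x - i)) / (Nat.factorial j : ℤ)

/-- `p_{d,k}(n) = 3d·C(n+k, 1+k) + Σ_{i=1}^{k} (3i+2)·C(n-1+k-i, k-i)`. -/
def hp (d k n : ℤ) : ℤ :=
  3 * d * pbinom (n + k) (1 + k).toNat
    + ∑ i ∈ Finset.Icc 1 k.toNat, (3 * (i : ℤ) + 2) * pbinom (n - 1 + k - (i : ℤ)) (k.toNat - i)

/-- The sequence of the main construction, with `a j = 0` for `j ≤ 0`. -/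
def hseq (d : ℤ) (m : ℤ) : ℤ :=
  if m ≤ 0 then 0
  else if m = 1 then 3 * d - 2
  else if m = 2 then 0
  else
    if (m % (3 * d)) % 3 = 0 then hp d ((m % (3 * d)) / 3) (m / (3 * d))
    else if (m % (3 * d)) % 3 = 1 then 3 * d
    else if m % (3 * d) = 3 * d - 1 then 2
    else 3

lemma pbinom_zero (x : ℤ) : pbinom x 0 = 1 := by simp [pbinom]

lemma pbinom_one (x : ℤ) : pbinom x 1 = x := by simp [pbinom]

lemma pbinom_natCast (n : ℕ) (j : ℕ) : pbinom (n : ℤ) j = (n.choose j : ℤ) := by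
  unfold pbinom
  rcases lt_or_ge n j with h | h
  · rw [Finset.prod_eq_zero (Finset.mem_range.mpr h) (by simp)]
    simp [Nat.choose_eq_zero_of_lt h]
  · have he : (∏ i ∈ Finset.range j, ((n:ℤ) - i)) = ((n.descFactorial j : ℕ) : ℤ) := by
      rw [Nat.descFactorial_eq_prod_range, Nat.cast_prod]
      apply Finset.prod_congr rfl
      intro i hi
      have hi' : i ≤ n := le_trans (Nat.le_of_lt (Finset.mem_range.mp hi)) h
      rw [Nat.cast_sub hi']
    rw [he, Nat.descFactorial_eq_factorial_mul_choose]
    push_cast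
    rw [Int.mul_ediv_cancel_left]
    exact_mod_cast Nat.factorial_ne_zero j

/-- Nat-indexed version of `hp`. -/
def hpn (d : ℤ) (K N : ℕ) : ℤ :=
  3 * d * ((N + K).choose (K + 1))
    + ∑ i ∈ Finset.Icc 1 K, (3 * (i : ℤ) + 2) * ((N + K - 1 - i).choose (K - i) : ℤ)

lemma hp_eq (d : ℤ) (K N : ℕ) : hp d (K : ℤ) (N : ℤ) = hpn d K N := by
  unfold hp hpn
  have h1 : (1 + (K : ℤ)).toNat = K + 1 := by omega
  have h2 : ((K : ℤ)).toNat = K := by omega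
  rw [h1, h2]
  congr 1
  · have : (N : ℤ) + K = ((N + K : ℕ) : ℤ) := by push_cast; ring
    rw [this, pbinom_natCast]
  · apply Finset.sum_congr rfl
    intro i hi
    rcases Finset.mem_Icc.mp hi with ⟨hi1, hi2⟩
    rcases eq_or_lt_of_le hi2 with h | h
    · subst h
      simp [pbinom_zero]
    · have hc : ((N + K - 1 - i : ℕ) : ℤ) = (N : ℤ) - 1 + K - i := by omega
      rw [← hc, pbinom_natCast]

lemma hpn_rec (d : ℤ) (L M : ℕ) :
    hpn d (L+1) (M+1) = hpn d L (M+1) + hpn d (L+1) M := by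
  unfold hpn
  rw [Finset.sum_Icc_succ_top (by omega : (1:ℕ) ≤ L+1),
      Finset.sum_Icc_succ_top (by omega : (1:ℕ) ≤ L+1)]
  have hsum : ∑ i ∈ Finset.Icc 1 L, (3*(i:ℤ)+2) * ((M+1+(L+1)-1-i).choose (L+1-i) : ℤ)
      = ∑ i ∈ Finset.Icc 1 L, ((3*(i:ℤ)+2) * ((M+1+L-1-i).choose (L-i) : ℤ)
        + (3*(i:ℤ)+2) * ((M+(L+1)-1-i).choose (L+1-i) : ℤ)) := by
    apply Finset.sum_congr rfl
    intro i hi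
    rcases Finset.mem_Icc.mp hi with ⟨h1, h2⟩
    have e1 : M+1+(L+1)-1-i = (M+L-i)+1 := by omega
    have e2 : L+1-i = (L-i)+1 := by omega
    have e3 : M+1+L-1-i = M+L-i := by omega
    have e4 : M+(L+1)-1-i = M+L-i := by omega
    rw [e1, e2, e3, e4, Nat.choose_succ_succ']
    push_cast
    ring
  rw [hsum, Finset.sum_add_distrib]
  have e5 : M+1+(L+1) = (M+L+1)+1 := by omega
  rw [e5, Nat.choose_succ_succ' (M+L+1) (L+1)]
  have e7 : M+1+L = M+L+1 := by omega
  have e8 : M+(L+1) = M+L+1 := by omega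
  rw [e7, e8]
  simp [Nat.choose_zero_right]
  ring

lemma choose_aux (k : ℕ) : ∀ n : ℕ, n ≤ (n + k).choose (k+1) := by
  intro n
  induction n with
  | zero => exact Nat.zero_le _
  | succ n ih =>
    have e : n + 1 + k = (n + k) + 1 := by omega
    rw [e, Nat.choose_succ_succ']
    have h1 : 1 ≤ (n + k).choose k := Nat.choose_pos (by omega)
    omega

lemma hpn_ge (d : ℤ) (K N : ℕ) (hd : 1 ≤ d) (hK : 1 ≤ K) :
    3 * d * N + 3 * K + 2 ≤ hpn d K N := by
  unfold hpn
  have h1 : (N : ℤ) ≤ ((N + K).choose (K+1) : ℤ) := by exact_mod_cast choose_aux K N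
  have h2 : 3 * d * (N:ℤ) ≤ 3 * d * ((N + K).choose (K+1) : ℤ) := by
    apply mul_le_mul_of_nonneg_left h1 (by linarith)
  have h3 := Finset.single_le_sum (s := Finset.Icc 1 K)
    (f := fun i : ℕ => (3*(i:ℤ)+2) * (((N + K - 1 - i)).choose (K - i) : ℤ))
    (fun i hi => by positivity) (Finset.mem_Icc.mpr ⟨hK, le_refl K⟩)
  simp only [Nat.sub_self, Nat.choose_zero_right, Nat.cast_one, mul_one] at h3
  linarith

lemma hp_zero (d n : ℤ) : hp d 0 n = 3 * d * n := by
  unfold hp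
  norm_num [pbinom_one]

lemma hp_rec (d k n : ℤ) (hk : 1 ≤ k) (hn : 1 ≤ n) :
    hp d k n = hp d (k-1) n + hp d k (n-1) := by
  obtain ⟨L, hL⟩ : ∃ L : ℕ, k = (L : ℤ) + 1 := ⟨(k-1).toNat, by omega⟩
  obtain ⟨M, hM⟩ : ∃ M : ℕ, n = (M : ℤ) + 1 := ⟨(n-1).toNat, by omega⟩
  subst hL hM
  have e1 : (L : ℤ) + 1 = ((L + 1 : ℕ) : ℤ) := by push_cast; ring
  have e2 : (M : ℤ) + 1 = ((M + 1 : ℕ) : ℤ) := by push_cast; ring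
  have e3 : (L : ℤ) + 1 - 1 = (L : ℤ) := by ring
  have e4 : (M : ℤ) + 1 - 1 = (M : ℤ) := by ring
  rw [e3, e4]
  rw [e1, e2, hp_eq, hp_eq, hp_eq, hpn_rec]

lemma hp_ge (d k n : ℤ) (hd : 1 ≤ d) (hk : 1 ≤ k) (hn : 0 ≤ n) :
    3 * d * n + 3 * k + 2 ≤ hp d k n := by
  obtain ⟨K, hK⟩ : ∃ K : ℕ, k = (K : ℤ) := ⟨k.toNat, by omega⟩
  obtain ⟨N, hN⟩ : ∃ N : ℕ, n = (N : ℤ) := ⟨n.toNat, by omega⟩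
  subst hK hN
  rw [hp_eq]
  exact hpn_ge d K N hd (by exact_mod_cast hk)

lemma hseq_nonpos (d j : ℤ) (h : j ≤ 0) : hseq d j = 0 := by
  rw [hseq, if_pos h]

lemma hseq_one (d : ℤ) : hseq d 1 = 3 * d - 2 := by norm_num [hseq]

lemma hseq_two (d : ℤ) : hseq d 2 = 0 := by norm_num [hseq]

lemma hseq_eval (d : ℤ) (hd : 1 ≤ d) (n r : ℤ) (hr0 : 0 ≤ r) (hr1 : r < 3*d)
    (h2 : 2 < 3*d*n + r) :
    hseq d (3*d*n + r) =
      if r % 3 = 0 then hp d (r/3) n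
      else if r % 3 = 1 then 3*d
      else if r = 3*d-1 then 2
      else 3 := by
  have hD : (0:ℤ) < 3*d := by linarith
  have hmod : (3*d*n + r) % (3*d) = r := by
    rw [show 3*d*n + r = r + 3*d*n by ring, Int.add_mul_emod_self_left,
      Int.emod_eq_of_lt hr0 hr1]
  have hdiv : (3*d*n + r) / (3*d) = n := by
    rw [show 3*d*n + r = r + 3*d*n by ring, Int.add_mul_ediv_left _ _ (ne_of_gt hD),
      Int.ediv_eq_zero_of_lt hr0 hr1]
    ring
  rw [hseq, hmod, hdiv, if_neg (by linarith : ¬(3*d*n + r ≤ 0)),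
    if_neg (show ¬(3*d*n + r = 1) by intro h'; rw [h'] at h2; norm_num at h2),
    if_neg (show ¬(3*d*n + r = 2) by intro h'; rw [h'] at h2; norm_num at h2)]

lemma hseq_30 (d : ℤ) (hd : 1 ≤ d) (n k : ℤ) (hk0 : 0 ≤ k) (hk1 : 3*k < 3*d)
    (h2 : 2 < 3*d*n + 3*k) : hseq d (3*d*n + 3*k) = hp d k n := by
  rw [hseq_eval d hd n (3*k) (by omega) hk1 h2, if_pos (by omega : (3*k) % 3 = 0),
    show 3*k/3 = k by omega]

lemma hseq_31 (d : ℤ) (hd : 1 ≤ d) (n k : ℤ) (hk0 : 0 ≤ k) (hk1 : 3*k+1 < 3*d)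
    (h2 : 2 < 3*d*n + (3*k+1)) : hseq d (3*d*n + (3*k+1)) = 3*d := by
  rw [hseq_eval d hd n (3*k+1) (by omega) hk1 h2, if_neg (by omega : ¬((3*k+1) % 3 = 0)),
    if_pos (by omega : (3*k+1) % 3 = 1)]

lemma hseq_32 (d : ℤ) (hd : 1 ≤ d) (n k : ℤ) (hk0 : 0 ≤ k) (hk1 : 3*k+2 < 3*d)
    (hne : 3*k+2 ≠ 3*d-1) (h2 : 2 < 3*d*n + (3*k+2)) : hseq d (3*d*n + (3*k+2)) = 3 := by
  rw [hseq_eval d hd n (3*k+2) (by omega) hk1 h2, if_neg (by omega : ¬((3*k+2) % 3 = 0)),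
    if_neg (by omega : ¬((3*k+2) % 3 = 1)), if_neg hne]

lemma hseq_last (d : ℤ) (hd : 1 ≤ d) (n : ℤ)
    (h2 : 2 < 3*d*n + (3*d-1)) : hseq d (3*d*n + (3*d-1)) = 2 := by
  rw [hseq_eval d hd n (3*d-1) (by omega) (by omega) h2, if_neg (by omega : ¬((3*d-1) % 3 = 0)),
    if_neg (by omega : ¬((3*d-1) % 3 = 1)), if_pos rfl]

theorem hseq_satisfies_hofstadter (d : ℤ) (hd : 1 ≤ d) (m : ℤ) (hm : 3 * d + 2 < m) :
    hseq d m = hseq d (m - hseq d (m - 1)) + hseq d (m - hseq d (m - 2)) := by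
  have hD : (0:ℤ) < 3*d := by linarith
  obtain ⟨n, r, rfl, hr0, hr1⟩ : ∃ n r, m = 3*d*n + r ∧ 0 ≤ r ∧ r < 3*d :=
    ⟨m / (3*d), m % (3*d), (Int.mul_ediv_add_emod m (3*d)).symm,
      Int.emod_nonneg m (ne_of_gt hD), Int.emod_lt_of_pos m hD⟩
  have hn1 : 1 ≤ n := by
    by_contra h
    push_neg at h
    nlinarith [mul_nonneg (show (0:ℤ) ≤ 3*d by linarith) (show (0:ℤ) ≤ -n by omega)]
  rcases (show r % 3 = 0 ∨ r % 3 = 1 ∨ r % 3 = 2 by omega) with h3 | h3 | h3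
  · -- r ≡ 0
    obtain ⟨k, hk0, rfl⟩ : ∃ k, 0 ≤ k ∧ r = 3*k := ⟨r/3, by omega, by omega⟩
    rcases eq_or_lt_of_le hk0 with hk | hk
    · -- k = 0
      subst hk
      rw [show (3*d*n + 3*0) - 1 = 3*d*(n-1) + (3*d-1) by ring,
        hseq_last d hd (n-1) (by linarith),
        show (3*d*n + 3*0) - 2 = 3*d*(n-1) + (3*(d-1)+1) by ring,
        hseq_31 d hd (n-1) (d-1) (by omega) (by omega) (by linarith),
        show (3*d*n + 3*0) - 3*d = 3*d*(n-1) + 3*0 by ring,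
        hseq_30 d hd (n-1) 0 le_rfl (by omega) (by linarith),
        hseq_30 d hd n 0 le_rfl (by omega) (by linarith),
        hp_zero, hp_zero]
      ring
    · -- k ≥ 1
      have hk1 : 1 ≤ k := hk
      rw [show (3*d*n + 3*k) - 1 = 3*d*n + (3*(k-1)+2) by ring,
        hseq_32 d hd n (k-1) (by omega) (by omega) (by omega) (by linarith),
        show (3*d*n + 3*k) - 2 = 3*d*n + (3*(k-1)+1) by ring,
        hseq_31 d hd n (k-1) (by omega) (by omega) (by linarith),
        show (3*d*n + 3*k) - 3 = 3*d*n + 3*(k-1) by ring,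
        hseq_30 d hd n (k-1) (by omega) (by omega) (by linarith),
        show (3*d*n + 3*k) - 3*d = 3*d*(n-1) + 3*k by ring,
        hseq_30 d hd (n-1) k (by omega) (by omega) (by linarith),
        hseq_30 d hd n k hk0 (by omega) (by linarith)]
      exact hp_rec d k n hk1 hn1
  · -- r ≡ 1
    obtain ⟨k, hk0, rfl⟩ : ∃ k, 0 ≤ k ∧ r = 3*k+1 := ⟨r/3, by omega, by omega⟩
    rcases eq_or_lt_of_le hk0 with hk | hk
    · -- k = 0
      subst hk
      rw [show (3*d*n + (3*0+1)) - 1 = 3*d*n + 3*0 by ring,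
        hseq_30 d hd n 0 le_rfl (by omega) (by linarith), hp_zero,
        show (3*d*n + (3*0+1)) - 3*d*n = 1 by ring, hseq_one,
        show (3*d*n + (3*0+1)) - 2 = 3*d*(n-1) + (3*d-1) by ring,
        hseq_last d hd (n-1) (by linarith),
        show (3*d*n + (3*0+1)) - 2 = 3*d*(n-1) + (3*d-1) by ring,
        hseq_last d hd (n-1) (by linarith),
        hseq_31 d hd n 0 le_rfl (by omega) (by linarith)]
      ring
    · -- k ≥ 1
      have hk1 : 1 ≤ k := hk
      have hP := hp_ge d k n hd hk1 (by omega)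
      rw [show (3*d*n + (3*k+1)) - 1 = 3*d*n + 3*k by ring,
        hseq_30 d hd n k hk0 (by omega) (by linarith),
        hseq_nonpos d ((3*d*n + (3*k+1)) - hp d k n) (by linarith),
        show (3*d*n + (3*k+1)) - 2 = 3*d*n + (3*(k-1)+2) by ring,
        hseq_32 d hd n (k-1) (by omega) (by omega) (by omega) (by linarith),
        show (3*d*n + (3*k+1)) - 3 = 3*d*n + (3*(k-1)+1) by ring,
        hseq_31 d hd n (k-1) (by omega) (by omega) (by linarith),
        hseq_31 d hd n k hk0 (by omega) (by linarith)]
      ring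
  · -- r ≡ 2
    obtain ⟨k, hk0, rfl⟩ : ∃ k, 0 ≤ k ∧ r = 3*k+2 := ⟨r/3, by omega, by omega⟩
    rcases eq_or_ne (3*k+2) (3*d-1) with hlast | hne
    · -- r = 3d - 1
      rcases eq_or_lt_of_le hk0 with hk | hk
      · -- k = 0 (d = 1)
        subst hk
        rw [show (3*d*n + (3*0+2)) - 1 = 3*d*n + (3*0+1) by ring,
          hseq_31 d hd n 0 le_rfl (by omega) (by linarith),
          show (3*d*n + (3*0+2)) - 2 = 3*d*n + 3*0 by ring,
          hseq_30 d hd n 0 le_rfl (by omega) (by linarith), hp_zero,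
          show (3*d*n + (3*0+2)) - 3*d = 3*d*(n-1) + (3*d-1) by linear_combination hlast,
          hseq_last d hd (n-1) (by linarith),
          show (3*d*n + (3*0+2)) - 3*d*n = 2 by ring, hseq_two,
          show 3*d*n + (3*0+2) = 3*d*n + (3*d-1) by omega,
          hseq_last d hd n (by linarith)]
        norm_num
      · -- k ≥ 1
        have hk1 : 1 ≤ k := hk
        have hP := hp_ge d k n hd hk1 (by omega)
        rw [show (3*d*n + (3*k+2)) - 1 = 3*d*n + (3*k+1) by ring,
          hseq_31 d hd n k hk0 (by omega) (by linarith),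
          show (3*d*n + (3*k+2)) - 2 = 3*d*n + 3*k by ring,
          hseq_30 d hd n k hk0 (by omega) (by linarith),
          show (3*d*n + (3*k+2)) - 3*d = 3*d*(n-1) + (3*d-1) by linear_combination hlast,
          hseq_last d hd (n-1) (by linarith),
          hseq_nonpos d ((3*d*n + (3*k+2)) - hp d k n) (by linarith),
          show 3*d*n + (3*k+2) = 3*d*n + (3*d-1) by omega,
          hseq_last d hd n (by linarith)]
        norm_num
    · -- r ≠ 3d - 1
      rcases eq_or_lt_of_le hk0 with hk | hk
      · -- k = 0
        subst hk
        rw [show (3*d*n + (3*0+2)) - 1 = 3*d*n + (3*0+1) by ring,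
          hseq_31 d hd n 0 le_rfl (by omega) (by linarith),
          show (3*d*n + (3*0+2)) - 2 = 3*d*n + 3*0 by ring,
          hseq_30 d hd n 0 le_rfl (by omega) (by linarith), hp_zero,
          show (3*d*n + (3*0+2)) - 3*d = 3*d*(n-1) + (3*0+2) by ring,
          hseq_32 d hd (n-1) 0 le_rfl (by omega) hne (by linarith),
          show (3*d*n + (3*0+2)) - 3*d*n = 2 by ring, hseq_two,
          hseq_32 d hd n 0 le_rfl (by omega) hne (by linarith)]
        norm_num
      · -- k ≥ 1
        have hk1 : 1 ≤ k := hk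
        have hP := hp_ge d k n hd hk1 (by omega)
        rw [show (3*d*n + (3*k+2)) - 1 = 3*d*n + (3*k+1) by ring,
          hseq_31 d hd n k hk0 (by omega) (by linarith),
          show (3*d*n + (3*k+2)) - 2 = 3*d*n + 3*k by ring,
          hseq_30 d hd n k hk0 (by omega) (by linarith),
          show (3*d*n + (3*k+2)) - 3*d = 3*d*(n-1) + (3*k+2) by ring,
          hseq_32 d hd (n-1) k hk0 (by omega) hne (by linarith),
          hseq_nonpos d ((3*d*n + (3*k+2)) - hp d k n) (by linarith),
          hseq_32 d hd n k hk0 (by omega) hne (by linarith)]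
        norm_num
end

section
/- Define a sequence by a_1 = 7, a_2 = 0, and for 9n + r > 2 with 0 ≤ r < 9: a_{9n+r} = 9n if r = 0; 9 if r ∈ {1,4,7}; 3 if r ∈ {2,5}; (9/2)n² + (9/2)n + 5 if r = 3; (3/2)n³ + (9/2)n² + 8n + 8 if r = 6; and 2 if r = 8. Then a_m = a_{m−a_{m−1}} + a_{m−a_{m−2}} for all m > 11, with a_j = 0 for j ≤ 0. -/
/-- The `d = 3` example: `a 1 = 7`, `a 2 = 0`, and for `9n + r > 2` with `0 ≤ r < 9`,
the value is `9n` if `r = 0`; `9` if `r ∈ {1,4,7}`; `3` if `r ∈ {2,5}`;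
`(9/2)n² + (9/2)n + 5` if `r = 3`; `(3/2)n³ + (9/2)n² + 8n + 8` if `r = 6`; `2` if `r = 8`;
with `a j = 0` for `j ≤ 0`. -/
def cubicSeq (m : ℤ) : ℤ :=
  if m ≤ 0 then 0
  else if m = 1 then 7
  else if m = 2 then 0
  else
    if m % 9 = 0 then 9 * (m / 9)
    else if m % 9 = 1 ∨ m % 9 = 4 ∨ m % 9 = 7 then 9
    else if m % 9 = 2 ∨ m % 9 = 5 then 3
    else if m % 9 = 3 then 9 * ((m / 9) * (m / 9 + 1)) / 2 + 5
    else if m % 9 = 6 then 3 * ((m / 9) * (m / 9 + 1) * (m / 9 + 2)) / 2 + 5 * (m / 9) + 8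
    else 2

lemma cs_nonpos (m : ℤ) (h : m ≤ 0) : cubicSeq m = 0 := by simp [cubicSeq, h]

lemma csOne : cubicSeq 1 = 7 := by norm_num [cubicSeq]
lemma csTwo : cubicSeq 2 = 0 := by norm_num [cubicSeq]

lemma cs0 (n : ℤ) (hn : 1 ≤ n) : cubicSeq (9*n) = 9*n := by
  have h1 : ¬(9*n ≤ 0) := by omega
  have h2 : (9*n : ℤ) ≠ 1 := by omega
  have h3 : (9*n : ℤ) ≠ 2 := by omega
  have hm : (9*n) % 9 = 0 := by omega
  have hd : (9*n) / 9 = n := by omega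
  simp [cubicSeq, h1, h2, h3, hm, hd]

lemma cs1 (n : ℤ) (hn : 1 ≤ n) : cubicSeq (9*n+1) = 9 := by
  have h1 : ¬(9*n+1 ≤ 0) := by omega
  have h2 : (9*n+1 : ℤ) ≠ 1 := by omega
  have h3 : (9*n+1 : ℤ) ≠ 2 := by omega
  have hm : (9*n+1) % 9 = 1 := by omega
  simp [cubicSeq, h1, h2, h3, hm]

lemma cs2 (n : ℤ) (hn : 1 ≤ n) : cubicSeq (9*n+2) = 3 := by
  have h1 : ¬(9*n+2 ≤ 0) := by omega
  have h2 : (9*n+2 : ℤ) ≠ 1 := by omega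
  have h3 : (9*n+2 : ℤ) ≠ 2 := by omega
  have hm : (9*n+2) % 9 = 2 := by omega
  simp [cubicSeq, h1, h2, h3, hm]

lemma cs3 (n k : ℤ) (hn : 0 ≤ n) (hk : n*(n+1) = k + k) : cubicSeq (9*n+3) = 9*k + 5 := by
  have h1 : ¬(9*n+3 ≤ 0) := by omega
  have h2 : (9*n+3 : ℤ) ≠ 1 := by omega
  have h3 : (9*n+3 : ℤ) ≠ 2 := by omega
  have hm : (9*n+3) % 9 = 3 := by omega
  have hd : (9*n+3) / 9 = n := by omega
  simp only [cubicSeq, h1, h2, h3, hm, hd, if_false, if_true]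
  norm_num
  rw [hk]; omega

lemma cs4 (n : ℤ) (hn : 0 ≤ n) : cubicSeq (9*n+4) = 9 := by
  have h1 : ¬(9*n+4 ≤ 0) := by omega
  have h2 : (9*n+4 : ℤ) ≠ 1 := by omega
  have h3 : (9*n+4 : ℤ) ≠ 2 := by omega
  have hm : (9*n+4) % 9 = 4 := by omega
  simp [cubicSeq, h1, h2, h3, hm]

lemma cs5 (n : ℤ) (hn : 0 ≤ n) : cubicSeq (9*n+5) = 3 := by
  have h1 : ¬(9*n+5 ≤ 0) := by omega
  have h2 : (9*n+5 : ℤ) ≠ 1 := by omega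
  have h3 : (9*n+5 : ℤ) ≠ 2 := by omega
  have hm : (9*n+5) % 9 = 5 := by omega
  simp [cubicSeq, h1, h2, h3, hm]

lemma cs6 (n j : ℤ) (hn : 0 ≤ n) (hj : n*(n+1)*(n+2) = j + j) :
    cubicSeq (9*n+6) = 3*j + 5*n + 8 := by
  have h1 : ¬(9*n+6 ≤ 0) := by omega
  have h2 : (9*n+6 : ℤ) ≠ 1 := by omega
  have h3 : (9*n+6 : ℤ) ≠ 2 := by omega
  have hm : (9*n+6) % 9 = 6 := by omega
  have hd : (9*n+6) / 9 = n := by omega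
  simp only [cubicSeq, h1, h2, h3, hm, hd, if_false, if_true]
  norm_num
  rw [hj]; omega

lemma cs7 (n : ℤ) (hn : 0 ≤ n) : cubicSeq (9*n+7) = 9 := by
  have h1 : ¬(9*n+7 ≤ 0) := by omega
  have h2 : (9*n+7 : ℤ) ≠ 1 := by omega
  have h3 : (9*n+7 : ℤ) ≠ 2 := by omega
  have hm : (9*n+7) % 9 = 7 := by omega
  simp [cubicSeq, h1, h2, h3, hm]

lemma cs8 (n : ℤ) (hn : 0 ≤ n) : cubicSeq (9*n+8) = 2 := by
  have h1 : ¬(9*n+8 ≤ 0) := by omega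
  have h2 : (9*n+8 : ℤ) ≠ 1 := by omega
  have h3 : (9*n+8 : ℤ) ≠ 2 := by omega
  have hm : (9*n+8) % 9 = 8 := by omega
  simp [cubicSeq, h1, h2, h3, hm]

theorem cubicSeq_satisfies_hofstadter (m : ℤ) (hm : 11 < m) :
    cubicSeq m = cubicSeq (m - cubicSeq (m - 1)) + cubicSeq (m - cubicSeq (m - 2)) := by
  have hr : m % 9 = 0 ∨ m % 9 = 1 ∨ m % 9 = 2 ∨ m % 9 = 3 ∨ m % 9 = 4 ∨ m % 9 = 5 ∨
      m % 9 = 6 ∨ m % 9 = 7 ∨ m % 9 = 8 := by omega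
  rcases hr with h | h | h | h | h | h | h | h | h
  · -- r = 0, m = 9n, n ≥ 2
    obtain ⟨n, hn, rfl⟩ : ∃ n, 2 ≤ n ∧ m = 9*n := ⟨m/9, by omega, by omega⟩
    rw [show 9*n - 1 = 9*(n-1)+8 by ring, cs8 _ (by omega),
        show 9*n - 2 = 9*(n-1)+7 by ring, cs7 _ (by omega),
        show 9*n - 9 = 9*(n-1) by ring, cs0 n (by omega), cs0 (n-1) (by omega)]
    ring
  · -- r = 1, m = 9n+1, n ≥ 2
    obtain ⟨n, hn, rfl⟩ : ∃ n, 2 ≤ n ∧ m = 9*n+1 := ⟨m/9, by omega, by omega⟩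
    rw [show 9*n+1 - 1 = 9*n by ring, cs0 n (by omega),
        show 9*n+1 - 9*n = (1:ℤ) by ring, csOne,
        show 9*n+1 - 2 = 9*(n-1)+8 by ring, cs8 _ (by omega),
        show 9*n+1 - 2 = 9*(n-1)+8 by ring, cs8 _ (by omega), cs1 n (by omega)]
    norm_num
  · -- r = 2, m = 9n+2, n ≥ 2
    obtain ⟨n, hn, rfl⟩ : ∃ n, 2 ≤ n ∧ m = 9*n+2 := ⟨m/9, by omega, by omega⟩
    rw [show 9*n+2 - 1 = 9*n+1 by ring, cs1 n (by omega),
        show 9*n+2 - 9 = 9*(n-1)+2 by ring, cs2 (n-1) (by omega),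
        show 9*n+2 - 2 = 9*n by ring, cs0 n (by omega),
        show 9*n+2 - 9*n = (2:ℤ) by ring, csTwo, cs2 n (by omega)]
    norm_num
  · -- r = 3, m = 9n+3, n ≥ 1
    obtain ⟨n, hn, rfl⟩ : ∃ n, 1 ≤ n ∧ m = 9*n+3 := ⟨m/9, by omega, by omega⟩
    obtain ⟨k, hk⟩ := Int.even_mul_succ_self n
    obtain ⟨k', hk'⟩ := Int.even_mul_succ_self (n-1)
    rw [show 9*n+3 - 1 = 9*n+2 by ring, cs2 n (by omega),
        show 9*n+3 - 3 = 9*n by ring, cs0 n (by omega),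
        show 9*n+3 - 2 = 9*n+1 by ring, cs1 n (by omega),
        show 9*n+3 - 9 = 9*(n-1)+3 by ring,
        cs3 (n-1) k' (by omega) (by linear_combination hk'),
        cs3 n k (by omega) (by linear_combination hk)]
    nlinarith [hk, hk']
  · -- r = 4, m = 9n+4, n ≥ 1
    obtain ⟨n, hn, rfl⟩ : ∃ n, 1 ≤ n ∧ m = 9*n+4 := ⟨m/9, by omega, by omega⟩
    obtain ⟨k, hk⟩ := Int.even_mul_succ_self n
    have hkn : n ≤ k := by nlinarith
    rw [show 9*n+4 - 1 = 9*n+3 by ring, cs3 n k (by omega) (by linear_combination hk),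
        cs_nonpos (9*n+4 - (9*k+5)) (by omega),
        show 9*n+4 - 2 = 9*n+2 by ring, cs2 n (by omega),
        show 9*n+4 - 3 = 9*n+1 by ring, cs1 n (by omega), cs4 n (by omega)]
    norm_num
  · -- r = 5, m = 9n+5, n ≥ 1
    obtain ⟨n, hn, rfl⟩ : ∃ n, 1 ≤ n ∧ m = 9*n+5 := ⟨m/9, by omega, by omega⟩
    obtain ⟨k, hk⟩ := Int.even_mul_succ_self n
    have hkn : n ≤ k := by nlinarith
    rw [show 9*n+5 - 1 = 9*n+4 by ring, cs4 n (by omega),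
        show 9*n+5 - 9 = 9*(n-1)+5 by ring, cs5 (n-1) (by omega),
        show 9*n+5 - 2 = 9*n+3 by ring, cs3 n k (by omega) (by linear_combination hk),
        cs_nonpos (9*n+5 - (9*k+5)) (by omega), cs5 n (by omega)]
    norm_num
  · -- r = 6, m = 9n+6, n ≥ 1
    obtain ⟨n, hn, rfl⟩ : ∃ n, 1 ≤ n ∧ m = 9*n+6 := ⟨m/9, by omega, by omega⟩
    obtain ⟨k, hk⟩ := Int.even_mul_succ_self n
    obtain ⟨j, hj⟩ := (Int.even_mul_succ_self n).mul_right (n+2)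
    obtain ⟨j', hj'⟩ := (Int.even_mul_succ_self (n-1)).mul_right (n+1)
    rw [show 9*n+6 - 1 = 9*n+5 by ring, cs5 n (by omega),
        show 9*n+6 - 3 = 9*n+3 by ring, cs3 n k (by omega) (by linear_combination hk),
        show 9*n+6 - 2 = 9*n+4 by ring, cs4 n (by omega),
        show 9*n+6 - 9 = 9*(n-1)+6 by ring,
        cs6 (n-1) j' (by omega) (by linear_combination hj'),
        cs6 n j (by omega) (by linear_combination hj)]
    nlinarith [hj, hj', hk]
  · -- r = 7, m = 9n+7, n ≥ 1
    obtain ⟨n, hn, rfl⟩ : ∃ n, 1 ≤ n ∧ m = 9*n+7 := ⟨m/9, by omega, by omega⟩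
    obtain ⟨j, hj⟩ := (Int.even_mul_succ_self n).mul_right (n+2)
    have h6 : 6*n ≤ n*(n+1)*(n+2) := by
      nlinarith [mul_nonneg (mul_nonneg (show (0:ℤ) ≤ n by omega)
        (show (0:ℤ) ≤ n-1 by omega)) (show (0:ℤ) ≤ n+4 by omega)]
    have hjn : 3*n ≤ j := by linarith
    rw [show 9*n+7 - 1 = 9*n+6 by ring, cs6 n j (by omega) (by linear_combination hj),
        cs_nonpos (9*n+7 - (3*j+5*n+8)) (by omega),
        show 9*n+7 - 2 = 9*n+5 by ring, cs5 n (by omega),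
        show 9*n+7 - 3 = 9*n+4 by ring, cs4 n (by omega), cs7 n (by omega)]
    norm_num
  · -- r = 8, m = 9n+8, n ≥ 1
    obtain ⟨n, hn, rfl⟩ : ∃ n, 1 ≤ n ∧ m = 9*n+8 := ⟨m/9, by omega, by omega⟩
    obtain ⟨j, hj⟩ := (Int.even_mul_succ_self n).mul_right (n+2)
    have h6 : 6*n ≤ n*(n+1)*(n+2) := by
      nlinarith [mul_nonneg (mul_nonneg (show (0:ℤ) ≤ n by omega)
        (show (0:ℤ) ≤ n-1 by omega)) (show (0:ℤ) ≤ n+4 by omega)]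
    have hjn : 3*n ≤ j := by linarith
    rw [show 9*n+8 - 1 = 9*n+7 by ring, cs7 n (by omega),
        show 9*n+8 - 9 = 9*(n-1)+8 by ring, cs8 (n-1) (by omega),
        show 9*n+8 - 2 = 9*n+6 by ring, cs6 n j (by omega) (by linear_combination hj),
        cs_nonpos (9*n+8 - (3*j+5*n+8)) (by omega), cs8 n (by omega)]
    norm_num
end
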